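/- Let p be an odd prime, G a finitely generated free pro-p group, and U ≤ G an open subgroup of index p with d(G) = λ and d(U)^{ab} free. Suppose a Z_p-module X = U^{ab} carries commuting data: X ≅ X^+ ⊕ X^- as above for a dihedral action with rank_{Z_p} X^+ = λ_F, and rank_{Z_p} X^- ≤ λ + λ_F (as established via the φ-map and invariants bound). If 2λ_F ≤ (p-1)λ - p and λ ≥ 2, then rank_{Z_p} X ≤ pλ - p < pλ - p + 1 = d(U), a contradiction; hence such a free G cannot exist. -/

import Mathlib

/-!
Let `x₁, …, xₙ` be free generators of `G` (so `λ ≤ n`), `σ = x_{i₀}` one of them outside `U`,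
and `π : G → ℤ/p` the quotient map with kernel `U`, normalised by `π σ = 1`. Every assignment of
the generators to elements of the wreath product `C_p ≀ C_p` lying over `π` extends to a
continuous `Θ : G → C_p ≀ C_p`, and on `U = ker π` the coordinate `u ↦ (Θ u).left 0` is a
homomorphism `U → 𝔽_p`. Sending `x_i` to the delta function at `s` and the other generators into
the top group gives `n p` such homomorphisms; those with `i ≠ i₀` are dual to the elements
`σ^{-k} x_i σ^{k - π(x_i)}` of `U`, and the one for `(i₀, 0)` is the only one not vanishing at
`σ^p`. Hence `d(U) ≥ (n - 1) p + 1`. On the other hand `U^ab ≅ ℤ_p^m`, and an additive map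
`ℤ_p^m → 𝔽_p` is determined by its values on the standard basis, so
`d(U) ≤ m ≤ λ + 2λ_F ≤ p λ - p ≤ (n - 1) p`.
-/

/-- A pro-`p` group: a compact, totally disconnected topological group all of whose
open normal subgroups have `p`-power index. -/
def IsProPGroup (p : ℕ) (G : Type) [Group G] [TopologicalSpace G] : Prop :=
  CompactSpace G ∧ TotallyDisconnectedSpace G ∧
    ∀ U : Subgroup G, U.Normal → IsOpen (U : Set G) →
      ∃ n : ℕ, Nat.card (G ⧸ U) = p ^ n

/-- A (finitely generated) free pro-`p` group: a pro-`p` group with a finite family of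
topological generators satisfying the universal lifting property with respect to
finite `p`-groups (with the discrete topology). -/
def IsFreeProPGroup (p : ℕ) (G : Type) [Group G] [TopologicalSpace G]
    [IsTopologicalGroup G] : Prop :=
  IsProPGroup p G ∧
  ∃ (n : ℕ) (x : Fin n → G),
    (Subgroup.closure (Set.range x)).topologicalClosure = ⊤ ∧
    ∀ (H : Type) [Group H] [Fintype H],
      (∃ m : ℕ, Nat.card H = p ^ m) →
      ∀ f : Fin n → H, ∃! φ : G →* H, @Continuous G H _ ⊥ φ ∧ ∀ i, φ (x i) = f i

/-- Continuous (i.e. locally constant) homomorphisms `G → 𝔽_p`; for a pro-`p` group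
this is `H¹(G, 𝔽_p)`. -/
def oneCocycles (p : ℕ) (G : Type) [Group G] [TopologicalSpace G] :
    Submodule (ZMod p) (LocallyConstant G (ZMod p)) where
  carrier := {f | ∀ g h : G, f (g * h) = f g + f h}
  add_mem' := by
    intro a b ha hb g h
    simp only [LocallyConstant.add_apply, ha g h, hb g h]
    ring
  zero_mem' := by intro g h; simp
  smul_mem' := by
    intro c a ha g h
    simp only [LocallyConstant.smul_apply, ha g h, smul_add]

/-- The generator rank `d(G) = dim_{𝔽_p} H¹(G, 𝔽_p)` of a pro-`p` group. -/
noncomputable def dRank (p : ℕ) (G : Type) [Group G] [TopologicalSpace G] : ℕ :=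
  Module.finrank (ZMod p) (oneCocycles p G)

/-- The maximal abelian (Hausdorff) quotient of a topological group: the quotient by the
closure of the commutator subgroup. -/
abbrev proAbelianization (G : Type) [Group G] [TopologicalSpace G] [IsTopologicalGroup G] :
    Type :=
  G ⧸ (commutator G).topologicalClosure

open Multiplicative

section Generators

variable {G : Type} [Group G] [TopologicalSpace G] [IsTopologicalGroup G]

theorem MonoidHom.eq_of_topologicalClosure_closure_eq_top {ι : Type} {x : ι → G}
    (hx : (Subgroup.closure (Set.range x)).topologicalClosure = ⊤) {H : Type} [Group H]
    {φ ψ : G →* H} (hφ : IsLocallyConstant φ) (hψ : IsLocallyConstant ψ)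
    (h : ∀ i, φ (x i) = ψ (x i)) : φ = ψ := by
  let _ : TopologicalSpace H := ⊥
  have : DiscreteTopology H := ⟨rfl⟩
  have hle : (Subgroup.closure (Set.range x)).topologicalClosure ≤ φ.eqLocus ψ :=
    Subgroup.topologicalClosure_minimal _
      ((Subgroup.closure_le _).2 (Set.range_subset_iff.2 h))
      (isClosed_eq hφ.continuous hψ.continuous)
  rw [hx] at hle
  exact MonoidHom.ext fun g => hle (Subgroup.mem_top g)

theorem exists_notMem_of_topologicalClosure_closure_eq_top {ι : Type} {x : ι → G}
    (hx : (Subgroup.closure (Set.range x)).topologicalClosure = ⊤) {U : OpenSubgroup G}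
    (hU : (U : Subgroup G) ≠ ⊤) : ∃ i, x i ∉ U := by
  by_contra! h
  refine hU (top_le_iff.1 (hx ▸ Subgroup.topologicalClosure_minimal _ ?_ U.isClosed))
  exact (Subgroup.closure_le _).2 (Set.range_subset_iff.2 h)

end Generators

namespace oneCocycles

variable {p : ℕ} {G : Type} [Group G] [TopologicalSpace G]

def toMonoidHom (f : oneCocycles p G) : G →* Multiplicative (ZMod p) :=
  MonoidHom.mk' (fun g => ofAdd (f.1 g)) fun g h => congrArg ofAdd (f.2 g h)

@[simp]
theorem toMonoidHom_apply (f : oneCocycles p G) (g : G) :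
    toMonoidHom f g = ofAdd (f.1 g) := rfl

theorem isLocallyConstant_toMonoidHom (f : oneCocycles p G) :
    IsLocallyConstant (toMonoidHom f) :=
  f.1.isLocallyConstant.comp ofAdd

theorem isClosed_ker_toMonoidHom (f : oneCocycles p G) :
    IsClosed ((toMonoidHom f).ker : Set G) :=
  (isLocallyConstant_toMonoidHom f).isClosed_fiber 1

def evalₗ (g : G) : oneCocycles p G →ₗ[ZMod p] ZMod p :=
  (LocallyConstant.evalₗ (ZMod p) g).comp (oneCocycles p G).subtype

@[simp]
theorem evalₗ_apply (g : G) (f : oneCocycles p G) : evalₗ g f = f.1 g := rfl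

theorem eq_zero_of_toMonoidHom_eq_one {f : oneCocycles p G} (hf : toMonoidHom f = 1) :
    f = 0 :=
  Subtype.ext <| LocallyConstant.ext fun g => congrArg toAdd (DFunLike.congr_fun hf g)

end oneCocycles

theorem dRank_le_of_topologicalClosure_closure_eq_top (p : ℕ) [Fact p.Prime] {G : Type} [Group G]
    [TopologicalSpace G] [IsTopologicalGroup G] {n : ℕ} {x : Fin n → G}
    (hx : (Subgroup.closure (Set.range x)).topologicalClosure = ⊤) : dRank p G ≤ n := by
  let ev : oneCocycles p G →ₗ[ZMod p] (Fin n → ZMod p) :=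
    LinearMap.pi fun i => oneCocycles.evalₗ (x i)
  have hev : Function.Injective ev := by
    refine (injective_iff_map_eq_zero ev).2 fun f hf => oneCocycles.eq_zero_of_toMonoidHom_eq_one ?_
    refine MonoidHom.eq_of_topologicalClosure_closure_eq_top hx
      (oneCocycles.isLocallyConstant_toMonoidHom f) (IsLocallyConstant.const 1) fun i => ?_
    simpa [ev] using congrFun hf i
  exact (LinearMap.finrank_le_finrank_of_injective hev).trans_eq (Module.finrank_fin_fun _)

namespace PadicInt

variable {p : ℕ} [Fact p.Prime]

theorem addMonoidHom_zmod_apply (φ : ℤ_[p] →+ ZMod p) (x : ℤ_[p]) :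
    φ x = (toZMod x).val • φ 1 := by
  obtain ⟨y, hy⟩ := Ideal.mem_span_singleton'.1 (maximalIdeal_eq_span_p (p := p) ▸ toZMod_spec x)
  rw [ZMod.cast_eq_val] at hy
  have hx : x = (toZMod x).val • (1 : ℤ_[p]) + p • y := by
    rw [nsmul_eq_mul, nsmul_eq_mul, mul_one, mul_comm, hy, add_sub_cancel]
  nth_rewrite 1 [hx]
  rw [map_add, map_nsmul, map_nsmul, nsmul_eq_mul p, ZMod.natCast_self, zero_mul, add_zero]

theorem addMonoidHom_zmod_ext {m : ℕ} {φ ψ : (Fin m → ℤ_[p]) →+ ZMod p}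
    (h : ∀ i, φ (Pi.single i 1) = ψ (Pi.single i 1)) : φ = ψ := by
  refine AddMonoidHom.functions_ext _ φ ψ fun i x => ?_
  rw [← AddMonoidHom.single_apply, ← AddMonoidHom.comp_apply, ← AddMonoidHom.comp_apply,
    addMonoidHom_zmod_apply, addMonoidHom_zmod_apply (ψ.comp _)]
  simpa using congrArg ((toZMod x).val • ·) (h i)

end PadicInt

theorem card_le_of_linearIndependent_oneCocycles (p : ℕ) [Fact p.Prime] {H : Type} [Group H]
    [TopologicalSpace H] [IsTopologicalGroup H] {m : ℕ}
    (e : proAbelianization H ≃* Multiplicative (Fin m → ℤ_[p])) {ι : Type} [Fintype ι]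
    {v : ι → oneCocycles p H} (hv : LinearIndependent (ZMod p) v) : Fintype.card ι ≤ m := by
  let rep : Fin m → H := fun i => (e.symm (ofAdd (Pi.single i 1))).out
  let ev : oneCocycles p H →ₗ[ZMod p] (Fin m → ZMod p) :=
    LinearMap.pi fun i => oneCocycles.evalₗ (rep i)
  have hev : Function.Injective ev := by
    refine (injective_iff_map_eq_zero ev).2 fun f hf => oneCocycles.eq_zero_of_toMonoidHom_eq_one ?_
    let fbar : proAbelianization H →* Multiplicative (ZMod p) :=
      QuotientGroup.lift _ (oneCocycles.toMonoidHom f)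
        (Subgroup.topologicalClosure_minimal _ (Abelianization.commutator_subset_ker _)
          (oneCocycles.isClosed_ker_toMonoidHom f))
    have hfbar : AddMonoidHom.toMultiplicative.symm (fbar.comp e.symm.toMonoidHom) = 0 := by
      refine PadicInt.addMonoidHom_zmod_ext fun i => ?_
      have hrep : (rep i : proAbelianization H) = e.symm (ofAdd (Pi.single i 1)) :=
        QuotientGroup.out_eq' _
      simpa [← hrep, fbar, ev] using congrFun hf i
    refine MonoidHom.ext fun g => ?_
    simpa [fbar] using DFunLike.congr_fun hfbar (toAdd (e g))
  simpa using (hv.map' ev (LinearMap.ker_eq_bot.2 hev)).fintype_card_le_finrank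

theorem Subgroup.normal_of_index_eq_prime_of_index_normalCore_eq_pow {G : Type} [Group G]
    {H : Subgroup G} {p k : ℕ} (hp : p.Prime) (hH : H.index = p)
    (hN : H.normalCore.index = p ^ k) : H.Normal := by
  have : H.FiniteIndex := ⟨hH ▸ hp.ne_zero⟩
  have hdvd_fact : H.normalCore.index ∣ p * (p - 1).factorial := by
    rw [Nat.mul_factorial_pred hp.ne_zero, ← hH, normalCore_eq_ker, index_ker, index_eq_card,
      ← Nat.card_perm]
    exact card_subgroup_dvd_card _
  have hcop : Nat.Coprime H.normalCore.index (p - 1).factorial := by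
    refine hN ▸ Nat.Coprime.pow_left k (hp.coprime_iff_not_dvd.2 ?_)
    rw [hp.dvd_factorial]
    have := hp.pos
    omega
  have hindex : H.normalCore.index = H.index :=
    hH ▸ dvd_antisymm (hcop.dvd_of_dvd_mul_right hdvd_fact) (hH ▸ index_dvd_of_le H.normalCore_le)
  have hrel : H.normalCore.relIndex H = 1 := by
    have := relIndex_mul_index H.normalCore_le
    rw [hindex] at this
    exact (Nat.mul_eq_right (hH ▸ hp.ne_zero)).1 this
  exact le_antisymm H.normalCore_le (relIndex_eq_one.1 hrel) ▸ H.normalCore_normal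

theorem IsProPGroup.normal_of_index_eq_prime {p : ℕ} (hp : p.Prime) {G : Type} [Group G]
    [TopologicalSpace G] [IsTopologicalGroup G] (hG : IsProPGroup p G) (U : OpenSubgroup G)
    (hU : (U : Subgroup G).index = p) : (U : Subgroup G).Normal := by
  have : (U : Subgroup G).FiniteIndex := ⟨hU ▸ hp.ne_zero⟩
  obtain ⟨k, hk⟩ := hG.2.2 _ (U : Subgroup G).normalCore_normal
    (Subgroup.isOpen_of_isClosed_of_finiteIndex _ (Subgroup.normalCore_isClosed _ U.isClosed))
  exact Subgroup.normal_of_index_eq_prime_of_index_normalCore_eq_pow hp hU hk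

theorem exists_monoidHom_ker_eq_of_index_eq_prime {p : ℕ} [Fact p.Prime] {G : Type} [Group G]
    [TopologicalSpace G] [IsTopologicalGroup G] (U : OpenSubgroup G) [(U : Subgroup G).Normal]
    (hU : (U : Subgroup G).index = p) {σ : G} (hσ : σ ∉ U) :
    ∃ π : G →* Multiplicative (ZMod p), π.ker = U ∧ IsLocallyConstant π ∧ π σ = ofAdd 1 := by
  let e : G ⧸ (U : Subgroup G) ≃* Multiplicative (ZMod p) :=
    mulEquivOfPrimeCardEq hU (by simp)
  set b := toAdd (e σ)
  have hb : b ≠ 0 := by simpa [b] using hσ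
  let scale : Multiplicative (ZMod p) ≃* Multiplicative (ZMod p) :=
    AddEquiv.toMultiplicative (LinearEquiv.smulOfNeZero (ZMod p) (ZMod p) b⁻¹ (inv_ne_zero hb))
  refine ⟨(e.trans scale).toMonoidHom.comp (QuotientGroup.mk' _), ?_, ?_, ?_⟩
  · ext g
    simp
  · exact ((IsLocallyConstant.iff_continuous (QuotientGroup.mk' (U : Subgroup G))).2
      continuous_quot_mk).comp (e.trans scale)
  · simp [scale, b, inv_mul_cancel₀ hb]

section Wreath

variable (p : ℕ)

def Wreath.translation : Multiplicative (ZMod p) →* MulAut (ZMod p → Multiplicative (ZMod p)) where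
  toFun b :=
    { toFun := fun F y => F (y - toAdd b)
      invFun := fun F y => F (y + toAdd b)
      left_inv := fun F => by simp
      right_inv := fun F => by simp
      map_mul' := fun _ _ => rfl }
  map_one' := by ext; simp
  map_mul' := fun _ _ => by ext; simp [sub_sub]

@[simp]
theorem Wreath.translation_apply (b : Multiplicative (ZMod p))
    (F : ZMod p → Multiplicative (ZMod p)) (y : ZMod p) :
    translation p b F y = F (y - toAdd b) := rfl

abbrev Wreath : Type :=
  (ZMod p → Multiplicative (ZMod p)) ⋊[Wreath.translation p] Multiplicative (ZMod p)

noncomputable instance [NeZero p] : Fintype (Wreath p) :=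
  Fintype.ofEquiv _ SemidirectProduct.equivProd.symm

theorem Wreath.card [NeZero p] : Nat.card (Wreath p) = p ^ (p + 1) := by
  rw [SemidirectProduct.card]
  simp [pow_succ]

variable {p}

theorem Wreath.left_pow_apply (F : ZMod p → Multiplicative (ZMod p)) (j : ℕ) (y : ZMod p) :
    ((⟨F, ofAdd 1⟩ : Wreath p) ^ j).left y = ∏ s ∈ Finset.range j, F (y - s) := by
  induction j with
  | zero => simp
  | succ j ih =>
    have hright : ((⟨F, ofAdd 1⟩ : Wreath p) ^ j).right = ofAdd (j : ZMod p) := by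
      rw [← SemidirectProduct.rightHom_eq_right, map_pow]
      simp [← ofAdd_nsmul]
    rw [pow_succ, SemidirectProduct.mul_left, Pi.mul_apply, ih, hright, translation_apply,
      Finset.prod_range_succ, toAdd_ofAdd]

theorem Wreath.left_pow_prime_apply [NeZero p] (F : ZMod p → Multiplicative (ZMod p))
    (y : ZMod p) : ((⟨F, ofAdd 1⟩ : Wreath p) ^ p).left y = ∏ z, F z := by
  rw [left_pow_apply]
  refine Finset.prod_nbij' (fun s => y - s) (fun z => (y - z).val) (by simp)
    (fun z _ => by simpa using ZMod.val_lt (y - z)) (fun s hs => ?_) (fun z _ => by simp)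
    (fun _ _ => rfl)
  simpa using ZMod.val_cast_of_lt (Finset.mem_range.1 hs)

theorem Wreath.left_inr_mul_mul_inr (b c : Multiplicative (ZMod p)) (w : Wreath p) :
    (SemidirectProduct.inr b * w * SemidirectProduct.inr c).left = translation p b w.left := by
  simp [SemidirectProduct.mul_left]

end Wreath

section WreathCocycles

variable {p : ℕ} {G : Type} [Group G] [TopologicalSpace G] {π : G →* Multiplicative (ZMod p)}

def wreathCocycle (Θ : G →* Wreath p) (hΘ : IsLocallyConstant Θ)
    (hright : ∀ g, (Θ g).right = π g) : oneCocycles p π.ker :=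
  ⟨⟨fun u => toAdd ((Θ u).left 0),
      (hΘ.comp fun w => toAdd (w.left 0)).comp_continuous continuous_subtype_val⟩,
    fun u v => by
      have hu : (Θ u).right = 1 := (hright u).trans u.2
      simp [SemidirectProduct.mul_left, hu]⟩

variable {Θ : G →* Wreath p} {hΘ : IsLocallyConstant Θ} {hright : ∀ g, (Θ g).right = π g}

theorem wreathCocycle_apply_pow_prime [NeZero p] {σ : G} {F : ZMod p → Multiplicative (ZMod p)}
    (hΘσ : Θ σ = ⟨F, ofAdd 1⟩) (hmem : σ ^ p ∈ π.ker) :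
    (wreathCocycle Θ hΘ hright).1 ⟨σ ^ p, hmem⟩ = toAdd (∏ z, F z) := by
  change toAdd ((Θ (σ ^ p)).left 0) = _
  rw [map_pow, hΘσ, Wreath.left_pow_prime_apply]

theorem wreathCocycle_apply_conj [NeZero p] {σ : G} (hΘσ : Θ σ = SemidirectProduct.inr (ofAdd 1))
    (k : ZMod p) (g : G) (j : ℕ) (hmem : (σ ^ k.val)⁻¹ * (g * (σ ^ j)⁻¹) * σ ^ k.val ∈ π.ker) :
    (wreathCocycle Θ hΘ hright).1 ⟨_, hmem⟩ = toAdd ((Θ g).left k) := by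
  have hσpow (i : ℕ) : Θ (σ ^ i) = SemidirectProduct.inr (ofAdd 1 ^ i) := by
    rw [map_pow, hΘσ, map_pow]
  change toAdd ((Θ ((σ ^ k.val)⁻¹ * (g * (σ ^ j)⁻¹) * σ ^ k.val)).left 0) = _
  rw [map_mul, map_mul, map_mul, map_inv, map_inv, hσpow, hσpow, ← map_inv, ← map_inv,
    Wreath.left_inr_mul_mul_inr, Wreath.translation_apply, SemidirectProduct.mul_left,
    SemidirectProduct.left_inr, map_one, mul_one]
  simp

end WreathCocycles

theorem exists_linearIndependent_oneCocycles_ker {p : ℕ} [Fact p.Prime] {G : Type} [Group G]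
    [TopologicalSpace G] [IsTopologicalGroup G] {n : ℕ} {x : Fin n → G}
    (hx : (Subgroup.closure (Set.range x)).topologicalClosure = ⊤)
    (hlift : ∀ f : Fin n → Wreath p, ∃ Θ : G →* Wreath p, IsLocallyConstant Θ ∧ ∀ i, Θ (x i) = f i)
    {π : G →* Multiplicative (ZMod p)} (hπ : IsLocallyConstant π) {i₀ : Fin n}
    (hσ : π (x i₀) = ofAdd 1) :
    ∃ v : Option ({i // i ≠ i₀} × ZMod p) → oneCocycles p π.ker, LinearIndependent (ZMod p) v := by
  classical
  choose Θ hΘ hΘx using fun is : Fin n × ZMod p =>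
    hlift fun i => ⟨if i = is.1 then Pi.mulSingle is.2 (ofAdd 1) else 1, π (x i)⟩
  have hright (is : Fin n × ZMod p) (g : G) : (Θ is g).right = π g := by
    refine DFunLike.congr_fun (MonoidHom.eq_of_topologicalClosure_closure_eq_top hx
      (φ := SemidirectProduct.rightHom.comp (Θ is)) ?_ hπ fun i => by simp [hΘx]) g
    exact (hΘ is).comp (SemidirectProduct.rightHom : Wreath p → _)
  let c (is : Fin n × ZMod p) : oneCocycles p π.ker := wreathCocycle (Θ is) (hΘ is) (hright is)
  have hpow_mem : x i₀ ^ p ∈ π.ker := by simp [hσ, ← ofAdd_nsmul]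
  have hpow (is : Fin n × ZMod p) : (c is).1 ⟨_, hpow_mem⟩ = if i₀ = is.1 then 1 else 0 := by
    rw [wreathCocycle_apply_pow_prime (by rw [hΘx, hσ])]
    split_ifs <;> simp [Pi.mulSingle_apply]
  have hΘσ (jt : {i // i ≠ i₀} × ZMod p) :
      Θ (jt.1, jt.2) (x i₀) = SemidirectProduct.inr (ofAdd 1) := by
    rw [hΘx, if_neg jt.1.2.symm, hσ]
    rfl
  have hw_mem (i : Fin n) (k : ZMod p) :
      (x i₀ ^ k.val)⁻¹ * (x i * (x i₀ ^ (toAdd (π (x i))).val)⁻¹) * x i₀ ^ k.val ∈ π.ker := by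
    refine π.normal_ker.conj_mem' _ ?_ _
    simp [hσ, ← ofAdd_nsmul]
  let w (ik : {i // i ≠ i₀} × ZMod p) : π.ker := ⟨_, hw_mem ik.1 ik.2⟩
  have hw (jt ik : {i // i ≠ i₀} × ZMod p) :
      (c (jt.1, jt.2)).1 (w ik) = if jt = ik then 1 else 0 := by
    rw [wreathCocycle_apply_conj (hΘσ jt), hΘx]
    simp only [Prod.ext_iff, Subtype.ext_iff]
    split_ifs <;> simp_all [eq_comm]
  refine ⟨fun o => Option.casesOn' o (c (i₀, 0)) fun jt => c (jt.1, jt.2),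
    LinearIndependent.option ?_ ?_⟩
  · exact LinearIndependent.of_pairwise_dual_eq_zero_one _ (fun ik => oneCocycles.evalₗ (w ik))
      (fun ik jt h => by simp [hw, Ne.symm h]) (fun ik => by simp [hw])
  · intro hmem
    have hle : Submodule.span (ZMod p) (Set.range fun jt : {i // i ≠ i₀} × ZMod p => c (jt.1, jt.2))
        ≤ LinearMap.ker (oneCocycles.evalₗ ⟨_, hpow_mem⟩) :=
      Submodule.span_le.2 (Set.range_subset_iff.2 fun jt => by simp [hpow, jt.1.2.symm])
    simpa [hpow] using hle hmem

theorem stmt13_general (p : ℕ) [Fact p.Prime]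
    (lam lamF : ℕ) (hineq : 2 * lamF + p ≤ (p - 1) * lam)
    (G : Type) [Group G] [TopologicalSpace G] [IsTopologicalGroup G]
    (hfree : IsFreeProPGroup p G) (hdG : dRank p G = lam)
    (U : OpenSubgroup G) (hU : (U : Subgroup G).index = p)
    (m : ℕ) (hm : m ≤ lam + 2 * lamF)
    (hX : Nonempty (proAbelianization (U : Subgroup G) ≃*
      Multiplicative (Fin m → ℤ_[p]))) :
    False := by
  have hp : p.Prime := Fact.out
  obtain ⟨hpro, n, x, hx, huniv⟩ := hfree
  have hlift (f : Fin n → Wreath p) :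
      ∃ Θ : G →* Wreath p, IsLocallyConstant Θ ∧ ∀ i, Θ (x i) = f i := by
    obtain ⟨Θ, ⟨hΘ, hΘx⟩, -⟩ := huniv (Wreath p) ⟨p + 1, Wreath.card p⟩ f
    let _ : TopologicalSpace (Wreath p) := ⊥
    have : DiscreteTopology (Wreath p) := ⟨rfl⟩
    exact ⟨Θ, (IsLocallyConstant.iff_continuous _).2 hΘ, hΘx⟩
  have : (U : Subgroup G).Normal := hpro.normal_of_index_eq_prime hp U hU
  obtain ⟨i₀, hi₀⟩ := exists_notMem_of_topologicalClosure_closure_eq_top hx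
    (U := U) fun h => hp.ne_one (by rw [← hU, h, Subgroup.index_top])
  obtain ⟨π, hker, hπ, hσ⟩ := exists_monoidHom_ker_eq_of_index_eq_prime U hU hi₀
  rw [← hker] at hX
  obtain ⟨v, hv⟩ := exists_linearIndependent_oneCocycles_ker hx hlift hπ hσ
  have hcard := card_le_of_linearIndependent_oneCocycles p hX.some hv
  have hlam : lam ≤ n := hdG ▸ dRank_le_of_topologicalClosure_closure_eq_top p hx
  simp only [Fintype.card_option, Fintype.card_prod, Fintype.card_subtype_compl, Fintype.card_fin,
    Fintype.card_unique, ZMod.card, Order.add_one_le_iff] at hcard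
  have hpn : p * lam ≤ p * n := Nat.mul_le_mul_left p hlam
  zify [hp.one_le, i₀.pos] at hineq hcard hpn
  linarith

/-- Group/module-theoretic core of Theorem 1.1: let `p` be an odd prime, `G` a finitely
generated free pro-`p` group with `d(G) = λ ≥ 2`, and `U` an open subgroup of index `p`
whose abelianization `X = U^{ab}` is a free `ℤ_p`-module of rank at most `λ + 2λ_F`
(as follows from the `φ`-map and the invariants bound, where `λ_F = rank X⁺`).
If `2λ_F ≤ (p-1)λ - p`, this contradicts the Schreier formula
`d(U) = p(λ-1) + 1`; hence such a free `G` cannot exist. -/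
theorem stmt13 (p : ℕ) (hp : p.Prime) (hodd : Odd p) [Fact p.Prime]
    (lam lamF : ℕ) (hlam : 2 ≤ lam) (hineq : 2 * lamF + p ≤ (p - 1) * lam)
    (G : Type) [Group G] [TopologicalSpace G] [IsTopologicalGroup G]
    (hfree : IsFreeProPGroup p G) (hdG : dRank p G = lam)
    (U : OpenSubgroup G) (hU : (U : Subgroup G).index = p)
    (m : ℕ) (hm : m ≤ lam + 2 * lamF)
    (hX : Nonempty (proAbelianization (U : Subgroup G) ≃*
      Multiplicative (Fin m → ℤ_[p]))) :
    False :=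
  stmt13_general p lam lamF hineq G hfree hdG U hU m hm hX
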